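/- arXiv:1804.02801 — 6 statements merged into one kernel-verified Lean document; each statement's English description precedes it below -/
import Mathlib

section
/- Let G be a graph and C a set of vertices such that the induced subgraph G[C] has maximum degree at most one. Suppose N(C) = {v_1, ..., v_ℓ} and there exist ℓ pairwise distinct edge components C_1, ..., C_ℓ of G[C] such that v_i is adjacent to C_i for each i. Then the maximum number of vertex-disjoint paths on three vertices (P_2's) in G equals the maximum number in G − (N(C) ∪ C) plus ℓ. -/
open Finset

variable {V : Type*}

def P2verts [DecidableEq V] (p : V × V × V) : Finset V := {p.1, p.2.1, p.2.2}

def IsP2 (G : SimpleGraph V) (p : V × V × V) : Prop :=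
  p.1 ≠ p.2.1 ∧ p.1 ≠ p.2.2 ∧ p.2.1 ≠ p.2.2 ∧ G.Adj p.1 p.2.1 ∧ G.Adj p.2.1 p.2.2

def IsP2Packing [DecidableEq V] (G : SimpleGraph V) (P : Finset (V × V × V)) : Prop :=
  (∀ p ∈ P, IsP2 G p) ∧
    ∀ p ∈ P, ∀ q ∈ P, p ≠ q → Disjoint (P2verts p) (P2verts q)

noncomputable def opt [DecidableEq V] (G : SimpleGraph V) : ℕ :=
  sSup {n | ∃ P : Finset (V × V × V), IsP2Packing G P ∧ P.card = n}

def restrict (G : SimpleGraph V) (S : Set V) : SimpleGraph V where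
  Adj a b := G.Adj a b ∧ a ∈ S ∧ b ∈ S
  symm := ⟨fun a b h => ⟨h.1.symm, h.2.2, h.2.1⟩⟩
  loopless := ⟨fun a h => G.loopless.irrefl a h.1⟩

def nbhd (G : SimpleGraph V) (C : Set V) : Set V :=
  {v | v ∉ C ∧ ∃ c ∈ C, G.Adj v c}

def MaxDegLeOne (G : SimpleGraph V) (C : Set V) : Prop :=
  ∀ v ∈ C, ∀ w ∈ C, ∀ x ∈ C, G.Adj v w → G.Adj v x → w = x

def IsEdgeComp (G : SimpleGraph V) (C : Set V) (x y : V) : Prop :=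
  x ∈ C ∧ y ∈ C ∧ x ≠ y ∧ G.Adj x y ∧
    (∀ z ∈ C, G.Adj z x → z = y) ∧ (∀ z ∈ C, G.Adj z y → z = x)

def IsComp (G : SimpleGraph V) (C : Set V) (s : Set V) : Prop :=
  (∃ x, s = {x} ∧ x ∈ C ∧ ∀ z ∈ C, ¬ G.Adj z x) ∨
  (∃ x y, s = {x, y} ∧ IsEdgeComp G C x y)

section Aux

variable [Fintype V] [DecidableEq V]

lemma packing_bdd (G : SimpleGraph V) :
    BddAbove {n | ∃ P : Finset (V × V × V), IsP2Packing G P ∧ P.card = n} := by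
  refine ⟨Fintype.card (V × V × V), ?_⟩
  rintro n ⟨P, _, rfl⟩
  exact Finset.card_le_univ P

lemma le_opt {G : SimpleGraph V} {P : Finset (V × V × V)} (hP : IsP2Packing G P) :
    P.card ≤ opt G :=
  le_csSup (packing_bdd G) ⟨P, hP, rfl⟩

lemma opt_spec (G : SimpleGraph V) : ∃ P, IsP2Packing G P ∧ P.card = opt G := by
  have h0 : (0 : ℕ) ∈ {n | ∃ P : Finset (V × V × V), IsP2Packing G P ∧ P.card = n} :=
    ⟨∅, ⟨fun p hp => absurd hp (Finset.notMem_empty p),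
      fun p hp => absurd hp (Finset.notMem_empty p)⟩, rfl⟩
  exact Nat.sSup_mem ⟨0, h0⟩ (packing_bdd G)

lemma verts_mem_of_restrict {G : SimpleGraph V} {S : Set V} {r : V × V × V}
    (h : IsP2 (restrict G S) r) : ∀ w ∈ P2verts r, w ∈ S := by
  intro w hw
  simp only [P2verts, mem_insert, mem_singleton] at hw
  obtain ⟨_, _, _, h1, h2⟩ := h
  rcases hw with rfl | rfl | rfl
  · exact h1.2.1
  · exact h1.2.2
  · exact h2.2.2

lemma touch_nbhd {G : SimpleGraph V} {C : Set V} (hdeg : MaxDegLeOne G C)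
    {p : V × V × V} (hp : IsP2 G p)
    (h : ∃ w ∈ P2verts p, w ∈ nbhd G C ∪ C) :
    ∃ w ∈ P2verts p, w ∈ nbhd G C := by
  obtain ⟨a, b, c⟩ := p
  obtain ⟨hab, hac, hbc, hAB, hBC⟩ := hp
  obtain ⟨w, hw, hwN⟩ := h
  rcases hwN with hN | hC
  · exact ⟨w, hw, hN⟩
  have hma : a ∈ P2verts (a, b, c) := by simp [P2verts]
  have hmb : b ∈ P2verts (a, b, c) := by simp [P2verts]
  have hmc : c ∈ P2verts (a, b, c) := by simp [P2verts]
  simp only [P2verts, mem_insert, mem_singleton] at hw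
  rcases hw with rfl | rfl | rfl
  · by_cases hb : b ∈ C
    · by_cases hc : c ∈ C
      · exact absurd (hdeg b hb w hC c hc hAB.symm hBC) hac
      · exact ⟨c, hmc, hc, b, hb, hBC.symm⟩
    · exact ⟨b, hmb, hb, w, hC, hAB.symm⟩
  · by_cases ha : a ∈ C
    · by_cases hc : c ∈ C
      · exact absurd (hdeg w hC a ha c hc hAB.symm hBC) hac
      · exact ⟨c, hmc, hc, w, hC, hBC.symm⟩
    · exact ⟨a, hma, ha, w, hC, hAB⟩
  · by_cases hb : b ∈ C
    · by_cases ha : a ∈ C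
      · exact absurd (hdeg b hb a ha w hC hAB.symm hBC) hac
      · exact ⟨a, hma, ha, b, hb, hAB⟩
    · exact ⟨b, hmb, hb, w, hC, hBC⟩

end Aux

lemma edgecomp_disj {G : SimpleGraph V} {C : Set V} {a b c d : V}
    (h1 : IsEdgeComp G C a b) (h2 : IsEdgeComp G C c d)
    (hne : ({a, b} : Set V) ≠ {c, d}) :
    ∀ w, w ∈ ({a, b} : Set V) → w ∉ ({c, d} : Set V) := by
  obtain ⟨haC, hbC, hab, hadj, hua, hub⟩ := h1
  obtain ⟨hcC, hdC, hcd, hadj', huc, hud⟩ := h2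
  intro w hw hw'
  apply hne
  rcases hw with rfl | rfl <;> rcases hw' with h | h
  · subst h
    have : d = b := hua d hdC hadj'.symm
    rw [this]
  · subst h
    have : c = b := hua c hcC hadj'
    rw [this, Set.pair_comm]
  · subst h
    have : d = a := hub d hdC hadj'.symm
    rw [this, Set.pair_comm]
  · subst h
    have : c = a := hub c hcC hadj'
    rw [this]

theorem fat_crown_reduction {V : Type*} [Fintype V] [DecidableEq V] (G : SimpleGraph V)
    (C : Set V) (hdeg : MaxDegLeOne G C)
    (ℓ : ℕ) (v : Fin ℓ → V) (hv : Function.Injective v)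
    (hvrange : Set.range v = nbhd G C)
    (e : Fin ℓ → V × V)
    (he : ∀ i, IsEdgeComp G C (e i).1 (e i).2)
    (hdist : ∀ i j, i ≠ j → ({(e i).1, (e i).2} : Set V) ≠ {(e j).1, (e j).2})
    (hadj : ∀ i, G.Adj (v i) (e i).1 ∨ G.Adj (v i) (e i).2) :
    opt G = opt (restrict G ((nbhd G C ∪ C)ᶜ)) + ℓ := by
  classical
  set S : Set V := (nbhd G C ∪ C)ᶜ with hSdef
  set G' := restrict G S with hG'def
  -- basic facts about the chosen paths
  have hvN : ∀ i, v i ∈ nbhd G C := fun i => hvrange ▸ Set.mem_range_self i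
  have hvnC : ∀ i, v i ∉ C := fun i => (hvN i).1
  set x : Fin ℓ → V := fun i => if G.Adj (v i) (e i).1 then (e i).1 else (e i).2 with hxdef
  set y : Fin ℓ → V := fun i => if G.Adj (v i) (e i).1 then (e i).2 else (e i).1 with hydef
  have hxyset : ∀ i, ({x i, y i} : Set V) = {(e i).1, (e i).2} := by
    intro i
    simp only [hxdef, hydef]
    split <;> simp [Set.pair_comm]
  have hxC : ∀ i, x i ∈ C := by
    intro i; simp only [hxdef]; split
    · exact (he i).1
    · exact (he i).2.1
  have hyC : ∀ i, y i ∈ C := by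
    intro i; simp only [hydef]; split
    · exact (he i).2.1
    · exact (he i).1
  have hxy : ∀ i, x i ≠ y i := by
    intro i; simp only [hxdef, hydef]; split
    · exact (he i).2.2.1
    · exact (he i).2.2.1.symm
  have hadjxy : ∀ i, G.Adj (x i) (y i) := by
    intro i; simp only [hxdef, hydef]; split
    · exact (he i).2.2.2.1
    · exact (he i).2.2.2.1.symm
  have hadjvx : ∀ i, G.Adj (v i) (x i) := by
    intro i; simp only [hxdef]; split
    · assumption
    · exact (hadj i).resolve_left (by assumption)
  set q : Fin ℓ → V × V × V := fun i => (v i, x i, y i) with hqdef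
  have hqinj : Function.Injective q := fun i j h => hv (congrArg Prod.fst h)
  have hqP2 : ∀ i, IsP2 G (q i) := by
    intro i
    refine ⟨?_, ?_, hxy i, hadjvx i, hadjxy i⟩
    · show v i ≠ x i
      exact fun h => hvnC i (h.symm ▸ hxC i)
    · show v i ≠ y i
      exact fun h => hvnC i (h.symm ▸ hyC i)
  have hqverts : ∀ i, ∀ w ∈ P2verts (q i), w ∈ nbhd G C ∪ C := by
    intro i w hw
    simp only [hqdef, P2verts, mem_insert, mem_singleton] at hw
    rcases hw with rfl | rfl | rfl
    · exact Or.inl (hvN i)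
    · exact Or.inr (hxC i)
    · exact Or.inr (hyC i)
  have hqdisj : ∀ i j, i ≠ j → Disjoint (P2verts (q i)) (P2verts (q j)) := by
    intro i j hij
    rw [Finset.disjoint_left]
    intro w hwi hwj
    simp only [hqdef, P2verts, mem_insert, mem_singleton] at hwi hwj
    have hdisjC : ∀ u, u ∈ ({x i, y i} : Set V) → u ∉ ({x j, y j} : Set V) := by
      rw [hxyset i, hxyset j]
      exact edgecomp_disj (he i) (he j) (hdist i j hij)
    have hmxi : x i ∈ ({x i, y i} : Set V) := Set.mem_insert _ _
    have hmyi : y i ∈ ({x i, y i} : Set V) := Set.mem_insert_of_mem _ rfl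
    rcases hwi with rfl | rfl | rfl <;> rcases hwj with h | h | h
    · exact hij (hv h)
    · exact hvnC i (h.symm ▸ hxC j)
    · exact hvnC i (h.symm ▸ hyC j)
    · exact hvnC j (h ▸ hxC i)
    · exact hdisjC (x i) hmxi (by rw [h]; exact Set.mem_insert _ _)
    · exact hdisjC (x i) hmxi (by rw [h]; exact Set.mem_insert_of_mem _ rfl)
    · exact hvnC j (h ▸ hyC i)
    · exact hdisjC (y i) hmyi (by rw [h]; exact Set.mem_insert _ _)
    · exact hdisjC (y i) hmyi (by rw [h]; exact Set.mem_insert_of_mem _ rfl)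
  -- lower bound : opt G' + ℓ ≤ opt G
  have hlow : opt G' + ℓ ≤ opt G := by
    obtain ⟨P', hP', hcard'⟩ := opt_spec G'
    have hP'verts : ∀ p ∈ P', ∀ w ∈ P2verts p, w ∈ S :=
      fun p hp => verts_mem_of_restrict (hP'.1 p hp)
    set Q : Finset (V × V × V) := P' ∪ Finset.univ.image q with hQdef
    have hsep : ∀ p ∈ P', ∀ i, Disjoint (P2verts p) (P2verts (q i)) := by
      intro p hp i
      rw [Finset.disjoint_left]
      intro w hwp hwq
      have h1 : w ∈ S := hP'verts p hp w hwp
      exact h1 (hqverts i w hwq)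
    have hPQdisj : Disjoint P' (Finset.univ.image q) := by
      rw [Finset.disjoint_left]
      intro p hp hpq
      obtain ⟨i, _, rfl⟩ := Finset.mem_image.mp hpq
      have h1 : v i ∈ S := hP'verts _ hp (v i) (by simp [hqdef, P2verts])
      exact h1 (Or.inl (hvN i))
    have hQpack : IsP2Packing G Q := by
      constructor
      · intro p hp
        rcases Finset.mem_union.mp hp with h | h
        · obtain ⟨h1, h2, h3, h4, h5⟩ := hP'.1 p h
          exact ⟨h1, h2, h3, h4.1, h5.1⟩
        · obtain ⟨i, _, rfl⟩ := Finset.mem_image.mp h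
          exact hqP2 i
      · intro p hp r hr hne
        rcases Finset.mem_union.mp hp with h | h <;> rcases Finset.mem_union.mp hr with h' | h'
        · exact hP'.2 p h r h' hne
        · obtain ⟨i, _, rfl⟩ := Finset.mem_image.mp h'
          exact hsep p h i
        · obtain ⟨i, _, rfl⟩ := Finset.mem_image.mp h
          exact (hsep r h' i).symm
        · obtain ⟨i, _, rfl⟩ := Finset.mem_image.mp h
          obtain ⟨j, _, rfl⟩ := Finset.mem_image.mp h'
          exact hqdisj i j (fun hij => hne (hij ▸ rfl))
    have hQcard : Q.card = P'.card + ℓ := by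
      rw [hQdef, Finset.card_union_of_disjoint hPQdisj,
        Finset.card_image_of_injective _ hqinj, Finset.card_univ, Fintype.card_fin]
    calc opt G' + ℓ = Q.card := by rw [hQcard, hcard']
    _ ≤ opt G := le_opt hQpack
  -- upper bound : opt G ≤ opt G' + ℓ
  have hup : opt G ≤ opt G' + ℓ := by
    obtain ⟨P, hP, hcard⟩ := opt_spec G
    letI : DecidablePred (fun p : V × V × V => ∃ w ∈ P2verts p, w ∈ nbhd G C ∪ C) :=
      fun p => Classical.dec _
    set T := P.filter (fun p => ∃ w ∈ P2verts p, w ∈ nbhd G C ∪ C) with hTdef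
    set R := P.filter (fun p => ¬ ∃ w ∈ P2verts p, w ∈ nbhd G C ∪ C) with hRdef
    have hcards : T.card + R.card = P.card :=
      Finset.card_filter_add_card_filter_not _
    -- R is a packing in G'
    have hRpack : IsP2Packing G' R := by
      constructor
      · intro p hp
        rw [hRdef, Finset.mem_filter] at hp
        obtain ⟨hpP, hpS⟩ := hp
        push_neg at hpS
        have hmem : ∀ w ∈ P2verts p, w ∈ S := fun w hw => hpS w hw
        obtain ⟨h1, h2, h3, h4, h5⟩ := hP.1 p hpP
        exact ⟨h1, h2, h3,
          ⟨h4, hmem _ (by simp [P2verts]), hmem _ (by simp [P2verts])⟩,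
          ⟨h5, hmem _ (by simp [P2verts]), hmem _ (by simp [P2verts])⟩⟩
      · intro p hp r hr hne
        rw [hRdef, Finset.mem_filter] at hp hr
        exact hP.2 p hp.1 r hr.1 hne
    have hR : R.card ≤ opt G' := le_opt hRpack
    -- T has at most ℓ elements
    have hT : T.card ≤ ℓ := by
      have hpick : ∀ p ∈ T, ∃ w ∈ P2verts p, w ∈ nbhd G C := by
        intro p hp
        rw [hTdef, Finset.mem_filter] at hp
        exact touch_nbhd hdeg (hP.1 p hp.1) hp.2
      set f : V × V × V → V := fun p =>
        if h : ∃ w ∈ P2verts p, w ∈ nbhd G C then h.choose else p.1 with hfdef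
      have hfspec : ∀ p ∈ T, f p ∈ P2verts p ∧ f p ∈ nbhd G C := by
        intro p hp
        have h := hpick p hp
        simp only [hfdef, dif_pos h]
        exact ⟨h.choose_spec.1, h.choose_spec.2⟩
      have : T.card ≤ (Finset.univ.image v).card := by
        apply Finset.card_le_card_of_injOn f
        · intro p hp
          obtain ⟨_, hfN⟩ := hfspec p hp
          rw [← hvrange] at hfN
          obtain ⟨i, hi⟩ := hfN
          exact Finset.mem_image.mpr ⟨i, Finset.mem_univ i, hi⟩
        · intro p hp r hr hfe
          by_contra hne
          have hd := hP.2 p (Finset.mem_filter.mp hp).1 r (Finset.mem_filter.mp hr).1 hne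
          rw [Finset.disjoint_left] at hd
          exact hd (hfspec p hp).1 (hfe ▸ (hfspec r hr).1)
      calc T.card ≤ (Finset.univ.image v).card := this
      _ = ℓ := by rw [Finset.card_image_of_injective _ hv, Finset.card_univ, Fintype.card_fin]
    calc opt G = P.card := hcard.symm
    _ = T.card + R.card := hcards.symm
    _ ≤ ℓ + opt G' := Nat.add_le_add hT hR
    _ = opt G' + ℓ := Nat.add_comm _ _
  exact le_antisymm hup hlow
end

section
/- Let G be a graph, C a vertex set with G[C] of maximum degree at most one, and A = N(C). Then any P_2-packing of G contains at most opt(G − (A ∪ C)) + |A| paths. -/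
open Finset

variable {V : Type*}

theorem packing_upper_bound {V : Type*} [Fintype V] [DecidableEq V] (G : SimpleGraph V)
    (C : Set V) (hdeg : MaxDegLeOne G C)
    (P : Finset (V × V × V)) (hP : IsP2Packing G P) :
    P.card ≤ opt (restrict G ((nbhd G C ∪ C)ᶜ)) + (nbhd G C).ncard := by
  classical
  set A := nbhd G C with hA
  have hAfin : A.Finite := Set.toFinite _
  set P1 := P.filter (fun p => (P2verts p ∩ hAfin.toFinset).Nonempty) with hP1
  set P2 := P \ P1 with hP2
  have hsub : P1 ⊆ P := Finset.filter_subset _ _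
  have hsub2 : P2 ⊆ P := Finset.sdiff_subset
  have hcardsd : P2.card = P.card - P1.card := Finset.card_sdiff_of_subset hsub
  have hle1 : P1.card ≤ P.card := Finset.card_le_card hsub
  have hkey : ∀ p ∈ P2, IsP2 (restrict G ((A ∪ C)ᶜ)) p := by
    intro p hp
    obtain ⟨hpP, hpn1⟩ := Finset.mem_sdiff.mp hp
    have hnA : ∀ v ∈ P2verts p, v ∉ A := by
      intro v hv hvA
      exact hpn1 (Finset.mem_filter.mpr ⟨hpP,
        ⟨v, Finset.mem_inter.mpr ⟨hv, hAfin.mem_toFinset.mpr hvA⟩⟩⟩)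
    obtain ⟨hab, hac, hbc, hAab, hAbc⟩ := hP.1 p hpP
    have ma : p.1 ∈ P2verts p := by simp [P2verts]
    have mb : p.2.1 ∈ P2verts p := by simp [P2verts]
    have mc : p.2.2 ∈ P2verts p := by simp [P2verts]
    have hbC : p.2.1 ∉ C := by
      intro hb
      have haC : p.1 ∈ C := by
        by_contra haC
        exact hnA p.1 ma ⟨haC, p.2.1, hb, hAab⟩
      have hcC : p.2.2 ∈ C := by
        by_contra hcC
        exact hnA p.2.2 mc ⟨hcC, p.2.1, hb, hAbc.symm⟩
      exact hac (hdeg p.2.1 hb p.1 haC p.2.2 hcC hAab.symm hAbc)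
    have haC : p.1 ∉ C := by
      intro ha
      exact hbC (by
        by_contra hb
        exact hnA p.2.1 mb ⟨hb, p.1, ha, hAab.symm⟩)
    have hcC : p.2.2 ∉ C := by
      intro hc
      exact hbC (by
        by_contra hb
        exact hnA p.2.1 mb ⟨hb, p.2.2, hc, hAbc⟩)
    have haS : p.1 ∈ (A ∪ C)ᶜ := fun h => h.elim (hnA p.1 ma) haC
    have hbS : p.2.1 ∈ (A ∪ C)ᶜ := fun h => h.elim (hnA p.2.1 mb) hbC
    have hcS : p.2.2 ∈ (A ∪ C)ᶜ := fun h => h.elim (hnA p.2.2 mc) hcC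
    exact ⟨hab, hac, hbc, ⟨hAab, haS, hbS⟩, ⟨hAbc, hbS, hcS⟩⟩
  have hpack : IsP2Packing (restrict G ((A ∪ C)ᶜ)) P2 :=
    ⟨hkey, fun p hp q hq hpq => hP.2 p (hsub2 hp) q (hsub2 hq) hpq⟩
  have hbdd : BddAbove {n | ∃ Q : Finset (V × V × V),
      IsP2Packing (restrict G ((A ∪ C)ᶜ)) Q ∧ Q.card = n} := by
    refine ⟨Fintype.card V, fun n hn => ?_⟩
    obtain ⟨Q, hQ, rfl⟩ := hn
    have : Q.card ≤ (Finset.univ : Finset V).card := by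
      apply Finset.card_le_card_of_injOn (fun p => p.1) (fun _ _ => Finset.mem_univ _)
      intro p hp q hq hfeq
      by_contra hne
      have hd := hQ.2 p hp q hq hne
      have heq : p.1 = q.1 := hfeq
      have hmq : p.1 ∈ P2verts q := by rw [heq]; simp [P2verts]
      exact (Finset.disjoint_left.mp hd (by simp [P2verts])) hmq
    simpa using this
  have h2 : P2.card ≤ opt (restrict G ((A ∪ C)ᶜ)) :=
    le_csSup hbdd ⟨P2, hpack, rfl⟩
  have h1 : P1.card ≤ A.ncard := by
    have hle : P1.card ≤ hAfin.toFinset.card := by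
      apply Finset.card_le_card_of_injOn
        (fun p => if h : (P2verts p ∩ hAfin.toFinset).Nonempty then h.choose else p.1)
      · intro p hp
        have h := (Finset.mem_filter.mp hp).2
        simp only [dif_pos h]
        exact (Finset.mem_inter.mp h.choose_spec).2
      · intro p hp q hq hfeq
        by_contra hne
        have hpx := (Finset.mem_filter.mp hp).2
        have hqx := (Finset.mem_filter.mp hq).2
        simp only [dif_pos hpx, dif_pos hqx] at hfeq
        have hd := hP.2 p (hsub hp) q (hsub hq) hne
        exact (Finset.disjoint_left.mp hd (Finset.mem_inter.mp hpx.choose_spec).1)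
          (hfeq ▸ (Finset.mem_inter.mp hqx.choose_spec).1)
    rwa [Set.ncard_eq_toFinset_card _ hAfin]
  omega
end

section
/- Let B be a finite bipartite graph with parts L and R. If there is no matching saturating L, then there exists a nonempty subset L' ⊆ L with |N(L')| < |L'| such that there exists a matching between L' and N(L') saturating N(L'). -/
/-- The neighborhood in `R` (type `β`) of a set `L'` of vertices of `L` (type `α`)
in a bipartite graph given by the adjacency relation `Adj`. -/
def NB {α β : Type*} (Adj : α → β → Prop) (L' : Finset α) : Set β :=
  {r | ∃ a ∈ L', Adj a r}

/-- A matching of the bipartite graph saturating all of `L`. -/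
def SaturatesL {α β : Type*} (Adj : α → β → Prop) (f : α → β) : Prop :=
  Function.Injective f ∧ ∀ a, Adj a (f a)

/-- A matching between `N(L')` and `L'` saturating `N(L')`: an injective assignment of
distinct vertices of `L'` to the vertices of `N(L')`, respecting adjacency. -/
def SaturatesNB {α β : Type*} (Adj : α → β → Prop) (L' : Finset α) (g : β → α) : Prop :=
  Set.InjOn g (NB Adj L') ∧ ∀ r ∈ NB Adj L', g r ∈ L' ∧ Adj (g r) r

/-! Take a set `L'` violating Hall's condition that is minimal under inclusion. For
`R' ⊆ N(L')` with fewer than `|R'|` neighbours in `L'`, removing those neighbours from `L'`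
leaves a strictly smaller violating set, since its neighbourhood avoids `R'`. So the reverse
Hall condition holds inside `N(L')`, and Hall's theorem gives a matching saturating `N(L')`. -/

open Finset

section

variable {α β : Type*} (Adj : α → β → Prop)

def IsHallViolator (s : Finset α) : Prop :=
  (NB Adj s).ncard < #s

variable {Adj}

theorem IsHallViolator.nonempty {s : Finset α} (hs : IsHallViolator Adj s) : s.Nonempty :=
  card_pos.mp (Nat.zero_lt_of_lt hs)

theorem NB_eq_coe_filter [Fintype β] [DecidableRel Adj] (s : Finset α) :
    NB Adj s = ↑({b | ∃ a ∈ s, Adj a b} : Finset β) := by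
  ext b
  simp [NB]

theorem exists_saturatesL_iff_forall_card_le [Fintype β] :
    (∃ f, SaturatesL Adj f) ↔ ∀ s : Finset α, #s ≤ (NB Adj s).ncard := by
  classical
  simp only [NB_eq_coe_filter, Set.ncard_coe_finset]
  exact (Fintype.all_card_le_filter_rel_iff_exists_injective Adj).symm

theorem card_le_card_filter_of_minimal [Fintype β] [DecidableRel Adj] {L : Finset α}
    (hL : Minimal (IsHallViolator Adj) L) {R : Finset β} (hR : ↑R ⊆ NB Adj L) :
    #R ≤ #{a ∈ L | ∃ r ∈ R, Adj a r} := by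
  classical
  set A := {a ∈ L | ∃ r ∈ R, Adj a r}
  by_contra! hlt
  obtain ⟨r, hr⟩ : R.Nonempty := card_pos.mp (Nat.zero_lt_of_lt hlt)
  obtain ⟨a, haL, har⟩ := hR hr
  have hA : A.Nonempty := ⟨a, mem_filter.mpr ⟨haL, r, hr, har⟩⟩
  have hNB : NB Adj (L \ A) ⊆ NB Adj L \ ↑R := by
    rintro b ⟨a, ha, hab⟩
    simp only [A, mem_sdiff, mem_filter, not_and, not_exists] at ha
    exact ⟨⟨a, ha.1, hab⟩, fun hb => ha.2 ha.1 b hb hab⟩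
  have hRcard : #R ≤ (NB Adj L).ncard := by
    simpa using Set.ncard_le_ncard hR
  have hLviol : (NB Adj L).ncard < #L := hL.prop
  refine hL.not_prop_of_lt (sdiff_ssubset (filter_subset _ _) hA) ?_
  calc (NB Adj (L \ A)).ncard
      ≤ (NB Adj L \ ↑R).ncard := Set.ncard_le_ncard hNB
    _ = (NB Adj L).ncard - #R := by rw [Set.ncard_sdiff' hR, Set.ncard_coe_finset]
    _ < #L - #A := by omega
    _ = #(L \ A) := (card_sdiff_of_subset (filter_subset _ _)).symm

theorem exists_saturatesNB_of_forall_card_le [Fintype β] [DecidableRel Adj] [Nonempty α]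
    {L : Finset α} (h : ∀ R : Finset β, ↑R ⊆ NB Adj L → #R ≤ #{a ∈ L | ∃ r ∈ R, Adj a r}) :
    ∃ g, SaturatesNB Adj L g := by
  classical
  let t : NB Adj L → Finset α := fun r => {a ∈ L | Adj a r}
  have hall : ∀ s : Finset (NB Adj L), #s ≤ #(s.biUnion t) := by
    intro s
    have := h (s.map (Function.Embedding.subtype _)) (by simp)
    convert this using 2
    · exact (card_map _).symm
    · ext a
      simp only [mem_biUnion, mem_filter, mem_map, Function.Embedding.coe_subtype, t]
      aesop
  obtain ⟨f, hf, hft⟩ := (all_card_le_biUnion_card_iff_exists_injective t).mp hall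
  refine ⟨fun r => if hr : r ∈ NB Adj L then f ⟨r, hr⟩ else Classical.arbitrary α, ?_, ?_⟩
  · intro r hr r' hr' hrr'
    simp only [dif_pos hr, dif_pos hr'] at hrr'
    exact congrArg Subtype.val (hf hrr')
  · intro r hr
    simpa [dif_pos hr, t] using hft ⟨r, hr⟩

end

theorem exists_violating_set_with_matching_general {α β : Type*} [Fintype β]
    (Adj : α → β → Prop)
    (hno : ¬ ∃ f : α → β, SaturatesL Adj f) :
    ∃ L' : Finset α, L'.Nonempty ∧ (NB Adj L').ncard < L'.card ∧
      ∃ g : β → α, SaturatesNB Adj L' g := by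
  classical
  obtain ⟨s, hs⟩ : ∃ s, IsHallViolator Adj s := by
    simpa [exists_saturatesL_iff_forall_card_le, IsHallViolator] using hno
  obtain ⟨L, hL⟩ := exists_minimal_of_wellFoundedLT _ ⟨s, hs⟩
  obtain ⟨a, ha⟩ := hL.prop.nonempty
  have : Nonempty α := ⟨a⟩
  exact ⟨L, ⟨a, ha⟩, hL.prop,
    exists_saturatesNB_of_forall_card_le fun _ hR => card_le_card_filter_of_minimal hL hR⟩

theorem exists_violating_set_with_matching {α β : Type*} [Fintype α] [Fintype β]
    (Adj : α → β → Prop)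
    (hno : ¬ ∃ f : α → β, SaturatesL Adj f) :
    ∃ L' : Finset α, L'.Nonempty ∧ (NB Adj L').ncard < L'.card ∧
      ∃ g : β → α, SaturatesNB Adj L' g :=
  exists_violating_set_with_matching_general Adj hno
end

section
/- Let G be a graph, P a maximal P_2-packing of G in which every component of G − V(P) has at most two vertices. Construct a bipartite graph B with one node u_C in L for each component C of G − V(P), two nodes v^1, v^2 in R for each vertex v ∈ V(P), and edges u_C v^1, u_C v^2 whenever v is adjacent to C in G. If B has no matching saturating L, then G contains a nonempty vertex set C* with G[C*] of maximum degree at most one such that the vertices of N(C*) can be enumerated v_1, ..., v_ℓ with 2ℓ distinct components C_1, ..., C_{2ℓ} of G[C*] where v_i is adjacent to C_{2i−1} and C_{2i} for each i. -/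
open Finset

variable {V : Type*}

/-- `P` is a maximal `P₂`-packing: no `P₂` of `G` is vertex-disjoint from all paths of `P`. -/
def IsMaximalP2Packing [DecidableEq V] (G : SimpleGraph V) (P : Finset (V × V × V)) : Prop :=
  IsP2Packing G P ∧
    ¬ ∃ p, IsP2 G p ∧ ∀ q ∈ P, Disjoint (P2verts p) (P2verts q)

lemma adj_of_reachable_pair {α : Type*} {H : SimpleGraph α} {x y : α}
    (h : H.Reachable x y) (hxy : x ≠ y)
    (hsupp : ∀ z, H.Reachable x z → z = x ∨ z = y) : H.Adj x y := by
  obtain ⟨w⟩ := h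
  cases w with
  | nil => exact absurd rfl hxy
  | @cons _ z _ h' p =>
    rcases hsupp z h'.reachable with rfl | rfl
    · exact absurd h' (H.irrefl)
    · exact h'

lemma hall_violation_matching {ι α : Type*} [DecidableEq α] (t : ι → Finset α)
    (hviol : ¬ ∀ s : Finset ι, s.card ≤ (s.biUnion t).card) :
    ∃ s : Finset ι, (s.biUnion t).card < s.card ∧
      ∃ g : {a // a ∈ s.biUnion t} → ι, Function.Injective g ∧
        ∀ a, g a ∈ s ∧ a.val ∈ t (g a) := by
  classical
  push_neg at hviol
  obtain ⟨s₀, hs₀⟩ := hviol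
  have hex : ∃ n, ∃ s : Finset ι, (s.biUnion t).card < s.card ∧ s.card = n :=
    ⟨s₀.card, s₀, hs₀, rfl⟩
  obtain ⟨s, hsv, hscard⟩ := Nat.find_spec hex
  have hmin : ∀ s' : Finset ι, (s'.biUnion t).card < s'.card → s.card ≤ s'.card := by
    intro s' h
    rw [hscard]
    exact Nat.find_le ⟨s', h, rfl⟩
  refine ⟨s, hsv, ?_⟩
  have key : ∀ A : Finset α, A ⊆ s.biUnion t →
      A.card ≤ (s.filter (fun K => ∃ a ∈ A, a ∈ t K)).card := by
    intro A hA
    rcases A.eq_empty_or_nonempty with rfl | hAne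
    · simp
    set M := s.filter (fun K => ∃ a ∈ A, a ∈ t K) with hM
    set s' := s \ M with hs'
    have hMs : M ⊆ s := filter_subset _ _
    have hMne : M.Nonempty := by
      obtain ⟨a, ha⟩ := hAne
      obtain ⟨K, hK, haK⟩ := mem_biUnion.mp (hA ha)
      exact ⟨K, mem_filter.mpr ⟨hK, a, ha, haK⟩⟩
    have hs'card : s'.card < s.card := by
      rw [hs', card_sdiff_of_subset hMs]
      have h1 := card_pos.mpr hMne
      have h2 := card_le_card hMs
      omega
    have hs'ok : s'.card ≤ (s'.biUnion t).card := by
      by_contra h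
      push_neg at h
      have := hmin s' h
      omega
    have hsub : s'.biUnion t ⊆ (s.biUnion t) \ A := by
      intro a ha
      obtain ⟨K, hK, haK⟩ := mem_biUnion.mp ha
      have hK' := mem_sdiff.mp hK
      refine mem_sdiff.mpr ⟨mem_biUnion.mpr ⟨K, hK'.1, haK⟩, fun haA => ?_⟩
      exact hK'.2 (mem_filter.mpr ⟨hK'.1, a, haA, haK⟩)
    have h1 := card_le_card hsub
    rw [card_sdiff_of_subset hA] at h1
    have h2 := card_le_card hA
    have h3 : s'.card = s.card - M.card := by rw [hs', card_sdiff_of_subset hMs]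
    have h4 := card_le_card hMs
    omega
  have hall : ∀ A : Finset {a // a ∈ s.biUnion t},
      A.card ≤ (A.biUnion (fun a => s.filter (fun K => a.val ∈ t K))).card := by
    intro A
    have h1 : (A.image Subtype.val).card = A.card :=
      card_image_of_injective _ Subtype.val_injective
    have h2 : A.image Subtype.val ⊆ s.biUnion t := by
      intro a ha
      obtain ⟨a', _, rfl⟩ := mem_image.mp ha
      exact a'.2
    have h3 : A.biUnion (fun a => s.filter (fun K => a.val ∈ t K))
        = s.filter (fun K => ∃ a ∈ A.image Subtype.val, a ∈ t K) := by
      ext K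
      simp only [mem_biUnion, mem_filter, mem_image]
      constructor
      · rintro ⟨a, haA, hKs, haK⟩
        exact ⟨hKs, a.val, ⟨a, haA, rfl⟩, haK⟩
      · rintro ⟨hKs, _, ⟨a, haA, rfl⟩, haK⟩
        exact ⟨a, haA, hKs, haK⟩
    rw [h3, ← h1]
    exact key _ h2
  obtain ⟨g, hginj, hg⟩ := (Finset.all_card_le_biUnion_card_iff_exists_injective _).mp hall
  refine ⟨g, hginj, fun a => ?_⟩
  have := hg a
  rw [mem_filter] at this
  exact this


set_option maxHeartbeats 1000000 in
theorem no_saturating_matching_gives_reducible_set {V : Type*} [Fintype V] [DecidableEq V]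
    (G : SimpleGraph V) (P : Finset (V × V × V)) (hP : IsMaximalP2Packing G P)
    -- every component of `G - V(P)` has at most two vertices
    (hsmall : ∀ K : (G.induce ((↑(P.biUnion P2verts) : Set V)ᶜ)).ConnectedComponent,
      K.supp.ncard ≤ 2)
    -- the auxiliary bipartite graph `B₁` (components of `G - V(P)` versus two copies
    -- `v¹, v²` of each vertex `v ∈ V(P)`) has no matching saturating the components' side
    (hno : ¬ ∃ f : (G.induce ((↑(P.biUnion P2verts) : Set V)ᶜ)).ConnectedComponent →
        {x : V // x ∈ P.biUnion P2verts} × Bool,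
      Function.Injective f ∧
        ∀ K, ∃ x ∈ K.supp, G.Adj ((f K).1 : V) x.1) :
    -- then there is a reducible set (of type (ii)):
    ∃ Cstar : Set V, Cstar.Nonempty ∧ MaxDegLeOne G Cstar ∧
      ∃ (ℓ : ℕ) (v : Fin ℓ → V), Function.Injective v ∧ Set.range v = nbhd G Cstar ∧
        ∃ c : Fin (2 * ℓ) → Set V, Function.Injective c ∧ (∀ i, IsComp G Cstar (c i)) ∧
          ∀ i : Fin ℓ,
            (∃ w ∈ c ⟨2 * i.1, by have := i.isLt; omega⟩, G.Adj (v i) w) ∧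
            (∃ w ∈ c ⟨2 * i.1 + 1, by have := i.isLt; omega⟩, G.Adj (v i) w) := by
  classical
  clear hP
  set W : Finset V := P.biUnion P2verts with hWdef
  set H : SimpleGraph _ := G.induce ((↑W : Set V)ᶜ) with hHdef
  -- basic adjacency transfer
  have adjH : ∀ (u c : V) (hu : u ∈ ((↑W : Set V)ᶜ)) (hc : c ∈ ((↑W : Set V)ᶜ)),
      G.Adj u c → H.Adj ⟨u, hu⟩ ⟨c, hc⟩ := by
    intro u c hu hc h
    rw [hHdef]
    exact h
  have adjG : ∀ (x y : ((↑W : Set V)ᶜ : Set V)), H.Adj x y → G.Adj x.val y.val := by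
    intro x y h
    rw [hHdef] at h
    exact h
  -- the bipartite neighborhoods
  set t : H.ConnectedComponent → Finset ({x // x ∈ W} × Bool) :=
    fun K => Finset.univ.filter (fun a => ∃ x ∈ K.supp, G.Adj (a.1 : V) (x : V)) with htdef
  have hviol : ¬ ∀ s : Finset H.ConnectedComponent, s.card ≤ (s.biUnion t).card := by
    intro h
    obtain ⟨f, hfinj, hf⟩ := (Finset.all_card_le_biUnion_card_iff_exists_injective t).mp h
    refine hno ⟨f, hfinj, fun K => ?_⟩
    have := hf K
    rw [htdef, mem_filter] at this
    exact this.2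
  obtain ⟨s, hsv, g, hginj, hg⟩ := hall_violation_matching t hviol
  -- supp facts
  have mem_supp : ∀ (K : H.ConnectedComponent) (x), x ∈ K.supp ↔ H.connectedComponentMk x = K :=
    fun K x => SimpleGraph.ConnectedComponent.mem_supp_iff K x
  have supp_ne : ∀ K : H.ConnectedComponent, K.supp.Nonempty := by
    intro K
    obtain ⟨x, hx⟩ := K.exists_rep
    exact ⟨x, (mem_supp K x).mpr hx⟩
  -- the reducible set
  set Cstar : Set V := {v | ∃ h : v ∈ ((↑W : Set V)ᶜ), H.connectedComponentMk ⟨v, h⟩ ∈ s}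
    with hCdef
  have suppC : ∀ K ∈ s, ∀ x ∈ K.supp, (x : V) ∈ Cstar := by
    intro K hK x hx
    refine ⟨x.2, ?_⟩
    rw [Subtype.coe_eta, (mem_supp K x).mp hx]
    exact hK
  have closure : ∀ (u : V), u ∈ ((↑W : Set V)ᶜ) → ∀ c ∈ Cstar, G.Adj u c → u ∈ Cstar := by
    intro u hu c hc hadj
    obtain ⟨hc1, hc2⟩ := hc
    refine ⟨hu, ?_⟩
    rw [SimpleGraph.ConnectedComponent.connectedComponentMk_eq_of_adj (adjH u c hu hc1 hadj)]
    exact hc2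
  have hCsubS : ∀ v ∈ Cstar, v ∈ ((↑W : Set V)ᶜ) := fun v hv => hv.1
  refine ⟨Cstar, ?_, ?_, ?_⟩
  · -- nonempty
    have hsne : s.Nonempty := card_pos.mp (by omega)
    obtain ⟨K, hK⟩ := hsne
    obtain ⟨x, hx⟩ := supp_ne K
    exact ⟨x, suppC K hK x hx⟩
  · -- MaxDegLeOne
    intro a ha b hb x hx hab hax
    by_contra hbx
    have hab' : a ≠ b := fun h => G.irrefl (h ▸ hab)
    have hax' : a ≠ x := fun h => G.irrefl (h ▸ hax)
    set a' : ((↑W : Set V)ᶜ : Set V) := ⟨a, ha.1⟩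
    set b' : ((↑W : Set V)ᶜ : Set V) := ⟨b, hb.1⟩
    set x' : ((↑W : Set V)ᶜ : Set V) := ⟨x, hx.1⟩
    have h1 : H.Adj a' b' := adjH a b ha.1 hb.1 hab
    have h2 : H.Adj a' x' := adjH a x ha.1 hx.1 hax
    set K := H.connectedComponentMk a' with hKdef
    have hm1 : a' ∈ K.supp := (mem_supp K a').mpr rfl
    have hm2 : b' ∈ K.supp := (mem_supp K b').mpr
      (SimpleGraph.ConnectedComponent.connectedComponentMk_eq_of_adj h1.symm)
    have hm3 : x' ∈ K.supp := (mem_supp K x').mpr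
      (SimpleGraph.ConnectedComponent.connectedComponentMk_eq_of_adj h2.symm)
    have hne1 : a' ≠ b' := fun h => hab' (congrArg Subtype.val h)
    have hne2 : a' ≠ x' := fun h => hax' (congrArg Subtype.val h)
    have hne3 : b' ≠ x' := fun h => hbx (congrArg Subtype.val h)
    have hsub : ({a', b', x'} : Set _) ⊆ K.supp := by
      intro z hz
      rcases hz with rfl | rfl | rfl
      · exact hm1
      · exact hm2
      · exact hm3
    have hcard : ({a', b', x'} : Set ((↑W : Set V)ᶜ : Set V)).ncard = 3 := by
      rw [Set.ncard_insert_of_notMem (by simp [hne1, hne2]) (Set.toFinite _),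
        Set.ncard_pair hne3]
    have := Set.ncard_le_ncard hsub (Set.toFinite _)
    have := hsmall K
    omega
  · -- the enumeration
    set T : Finset {x // x ∈ W} := (s.biUnion t).image Prod.fst with hTdef
    have hbool : ∀ (w : {x // x ∈ W}) (b : Bool), w ∈ T → (w, b) ∈ s.biUnion t := by
      intro w b hw
      obtain ⟨a, ha, hfst⟩ := mem_image.mp hw
      obtain ⟨K, hK, haK⟩ := mem_biUnion.mp ha
      refine mem_biUnion.mpr ⟨K, hK, ?_⟩
      rw [htdef, mem_filter] at haK ⊢
      obtain ⟨-, x, hx, hadj⟩ := haK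
      exact ⟨mem_univ _, x, hx, by rwa [hfst] at hadj⟩
    set e := T.equivFin with hedef
    refine ⟨T.card, fun i => ((e.symm i : T) : {x // x ∈ W}).val, ?_, ?_, ?_⟩
    · intro i j h
      exact e.symm.injective (Subtype.ext (Subtype.ext h))
    · -- range = nbhd
      ext u
      simp only [Set.mem_range]
      constructor
      · rintro ⟨i, rfl⟩
        set a := ((e.symm i : T) : {x // x ∈ W}) with hadef
        have haT : a ∈ T := (e.symm i).2
        obtain ⟨K, hK, haK⟩ := mem_biUnion.mp (hbool a false haT)
        rw [htdef, mem_filter] at haK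
        obtain ⟨-, x, hx, hadj⟩ := haK
        refine ⟨?_, (x : V), suppC K hK x hx, hadj⟩
        intro hmem
        exact (hCsubS _ hmem) (by simpa using a.2)
      · rintro ⟨hu1, c, hc, hadj⟩
        have hu : (u : V) ∈ W := by
          by_contra huW
          exact hu1 (closure u (by simpa using huW) c hc hadj)
        obtain ⟨hc1, hc2⟩ := hc
        have hmem : ((⟨u, hu⟩ : {x // x ∈ W}), false) ∈ s.biUnion t := by
          refine mem_biUnion.mpr ⟨H.connectedComponentMk ⟨c, hc1⟩, hc2, ?_⟩
          rw [htdef, mem_filter]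
          exact ⟨mem_univ _, ⟨c, hc1⟩, (mem_supp _ _).mpr rfl, hadj⟩
        have hT : (⟨u, hu⟩ : {x // x ∈ W}) ∈ T := mem_image.mpr ⟨_, hmem, rfl⟩
        exact ⟨e ⟨⟨u, hu⟩, hT⟩, by rw [Equiv.symm_apply_apply]⟩
    · -- the components
      set A : Fin T.card → Bool → {a // a ∈ s.biUnion t} :=
        fun i b => ⟨(((e.symm i : T) : {x // x ∈ W}), b), hbool _ b (e.symm i).2⟩ with hAdef
      set idx : Fin (2 * T.card) → Fin T.card := fun j => ⟨j.1 / 2, by omega⟩ with hidxdef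
      set cc : Fin (2 * T.card) → Set V :=
        fun j => Subtype.val '' (g (A (idx j) (j.1 % 2 == 1))).supp with hccdef
      -- image of supp determines the component
      have suppinj : ∀ K K' : H.ConnectedComponent,
          Subtype.val '' K.supp = Subtype.val '' K'.supp → K = K' := by
        intro K K' h
        obtain ⟨x, hx⟩ := supp_ne K
        have : (x : V) ∈ Subtype.val '' K'.supp := h ▸ ⟨x, hx, rfl⟩
        obtain ⟨y, hy, hyx⟩ := this
        have hyx' : y = x := Subtype.ext hyx
        rw [← (mem_supp K x).mp hx, ← (mem_supp K' y).mp hy, hyx']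
      -- IsComp for any component in s
      have iscomp : ∀ K ∈ s, IsComp G Cstar (Subtype.val '' K.supp) := by
        intro K hK
        have h2 := hsmall K
        have h1 : 0 < K.supp.ncard := (Set.ncard_pos (Set.toFinite _)).mpr (supp_ne K)
        have : K.supp.ncard = 1 ∨ K.supp.ncard = 2 := by omega
        rcases this with h | h
        · obtain ⟨x, hx⟩ := Set.ncard_eq_one.mp h
          left
          refine ⟨(x : V), by rw [hx, Set.image_singleton], ?_, ?_⟩
          · exact suppC K hK x (hx ▸ rfl)
          · intro z hz hadj
            obtain ⟨hz1, -⟩ := hz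
            have hzx : (⟨z, hz1⟩ : ((↑W : Set V)ᶜ : Set V)) ∈ K.supp := by
              rw [mem_supp, SimpleGraph.ConnectedComponent.connectedComponentMk_eq_of_adj
                (adjH z (x : V) hz1 x.2 hadj)]
              rw [Subtype.coe_eta]
              exact (mem_supp K x).mp (hx ▸ rfl)
            rw [hx] at hzx
            have : z = (x : V) := congrArg Subtype.val hzx
            exact G.irrefl (this ▸ hadj)
        · obtain ⟨x, y, hxy, hsupp⟩ := Set.ncard_eq_two.mp h
          have hxm : x ∈ K.supp := hsupp ▸ Set.mem_insert x {y}
          have hym : y ∈ K.supp := hsupp ▸ Set.mem_insert_of_mem x rfl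
          have hreach : H.Reachable x y :=
            SimpleGraph.ConnectedComponent.exact
              (((mem_supp K x).mp hxm).trans ((mem_supp K y).mp hym).symm)
          have hadjxy : H.Adj x y := by
            refine adj_of_reachable_pair hreach hxy ?_
            intro z hz
            have : z ∈ K.supp := by
              rw [mem_supp, SimpleGraph.ConnectedComponent.sound hz.symm]
              exact (mem_supp K x).mp hxm
            rw [hsupp] at this
            exact this
          right
          refine ⟨(x : V), (y : V), by rw [hsupp, Set.image_insert_eq, Set.image_singleton],
            suppC K hK x hxm, suppC K hK y hym,
            fun h => hxy (Subtype.ext h), adjG x y hadjxy, ?_, ?_⟩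
          · intro z hz hadj
            obtain ⟨hz1, -⟩ := hz
            have hzm : (⟨z, hz1⟩ : ((↑W : Set V)ᶜ : Set V)) ∈ K.supp := by
              rw [mem_supp, SimpleGraph.ConnectedComponent.connectedComponentMk_eq_of_adj
                (adjH z (x : V) hz1 x.2 hadj), Subtype.coe_eta]
              exact (mem_supp K x).mp hxm
            rw [hsupp] at hzm
            rcases hzm with h' | h'
            · exact absurd ((congrArg Subtype.val h') ▸ hadj) G.irrefl
            · exact congrArg Subtype.val h'
          · intro z hz hadj
            obtain ⟨hz1, -⟩ := hz
            have hzm : (⟨z, hz1⟩ : ((↑W : Set V)ᶜ : Set V)) ∈ K.supp := by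
              rw [mem_supp, SimpleGraph.ConnectedComponent.connectedComponentMk_eq_of_adj
                (adjH z (y : V) hz1 y.2 hadj), Subtype.coe_eta]
              exact (mem_supp K y).mp hym
            rw [hsupp] at hzm
            rcases hzm with h' | h'
            · exact congrArg Subtype.val h'
            · exact absurd ((congrArg Subtype.val h') ▸ hadj) G.irrefl
      refine ⟨cc, ?_, ?_, ?_⟩
      · -- injective
        intro j j' h
        rw [hccdef] at h
        have hKeq := suppinj _ _ h
        have hAeq := hginj hKeq
        rw [hAdef] at hAeq
        have hpair := congrArg Subtype.val hAeq
        have hfst : ((e.symm (idx j) : T) : {x // x ∈ W}) = ((e.symm (idx j') : T) : {x // x ∈ W}) :=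
          congrArg Prod.fst hpair
        have hidx : idx j = idx j' := e.symm.injective (Subtype.ext hfst)
        have hdiv : j.1 / 2 = j'.1 / 2 := congrArg Fin.val hidx
        have hsnd : (j.1 % 2 == 1) = (j'.1 % 2 == 1) := congrArg Prod.snd hpair
        have hmod : j.1 % 2 = j'.1 % 2 := by
          rcases Nat.mod_two_eq_zero_or_one j.1 with h1 | h1 <;>
            rcases Nat.mod_two_eq_zero_or_one j'.1 with h2 | h2 <;>
              rw [h1, h2] at hsnd ⊢
          all_goals exact absurd hsnd (by decide)
        exact Fin.ext (by omega)
      · -- IsComp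
        intro j
        exact iscomp _ (hg (A (idx j) (j.1 % 2 == 1))).1
      · -- adjacency
        have key : ∀ (jv : Fin (2 * T.card)) (i : Fin T.card) (b : Bool),
            jv.1 / 2 = i.1 → jv.1 % 2 = (cond b 1 0) →
            ∃ w ∈ cc jv, G.Adj (((e.symm i : T) : {x // x ∈ W}) : V) w := by
          intro jv i b h1 h2
          have h3 : idx jv = i := Fin.ext h1
          have h4 : (jv.1 % 2 == 1) = b := by cases b <;> rw [h2] <;> rfl
          have h5 : ∃ x ∈ (g (A i b)).supp, G.Adj (((A i b).val.1 : {x // x ∈ W}) : V) (x : V) := by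
            exact (mem_filter.mp (hg (A i b)).2).2
          obtain ⟨x, hx, hadj⟩ := h5
          refine ⟨(x : V), ?_, hadj⟩
          show (x : V) ∈ Subtype.val '' (g (A (idx jv) (jv.1 % 2 == 1))).supp
          simp only [h3, h4]
          exact ⟨x, hx, rfl⟩
        intro i
        constructor
        · exact key ⟨2 * i.1, by have := i.isLt; omega⟩ i false
            (by show 2 * i.1 / 2 = i.1; omega) (by show 2 * i.1 % 2 = 0; omega)
        · exact key ⟨2 * i.1 + 1, by have := i.isLt; omega⟩ i true
            (by show (2 * i.1 + 1) / 2 = i.1; omega) (by show (2 * i.1 + 1) % 2 = 1; omega)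
end

section
/- The graph on 10 vertices with V = {u,v,w,a,b,x,y,z,c,d} and E = {uv, vw, ua, ab, bw, xy, yz, cy, dy, by} does not contain three pairwise vertex-disjoint paths on three vertices. -/
open Finset

variable {V : Type*}

/-- The graph of Figure 1(b): vertices `0,...,9` standing for `u,v,w,a,b,x,y,z,c,d`,
with edges `uv, vw, ua, ab, bw, xy, yz, cy, dy` and the connecting edge `by`. -/
def figBGraph : SimpleGraph (Fin 10) :=
  SimpleGraph.fromRel (fun i j =>
    (i = 0 ∧ j = 1) ∨ (i = 1 ∧ j = 2) ∨ (i = 0 ∧ j = 3) ∨ (i = 3 ∧ j = 4) ∨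
    (i = 4 ∧ j = 2) ∨ (i = 5 ∧ j = 6) ∨ (i = 6 ∧ j = 7) ∨ (i = 8 ∧ j = 6) ∨
    (i = 9 ∧ j = 6) ∨ (i = 4 ∧ j = 6))

instance : DecidableRel figBGraph.Adj := fun a b =>
  decidable_of_iff _ (SimpleGraph.fromRel_adj _ a b).symm

lemma figB_adj_mem : ∀ a b : Fin 10, figBGraph.Adj a b → a ≠ 6 → b ≠ 6 →
    a ∈ ({0,1,2,3,4} : Finset (Fin 10)) := by decide

lemma figB_subset5 {p : Fin 10 × Fin 10 × Fin 10} (hp : IsP2 figBGraph p)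
    (h6 : (6 : Fin 10) ∉ P2verts p) : P2verts p ⊆ ({0,1,2,3,4} : Finset (Fin 10)) := by
  obtain ⟨_, _, _, h1, h2⟩ := hp
  simp only [P2verts, Finset.mem_insert, Finset.mem_singleton, not_or] at h6
  obtain ⟨n1, n2, n3⟩ := h6
  intro v hv
  simp only [P2verts, Finset.mem_insert, Finset.mem_singleton] at hv
  rcases hv with rfl | rfl | rfl
  · exact figB_adj_mem _ _ h1 (Ne.symm n1) (Ne.symm n2)
  · exact figB_adj_mem _ _ h2 (Ne.symm n2) (Ne.symm n3)
  · exact figB_adj_mem _ _ h2.symm (Ne.symm n3) (Ne.symm n2)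

lemma figB_card3 {p : Fin 10 × Fin 10 × Fin 10} (hp : IsP2 figBGraph p) :
    (P2verts p).card = 3 := by
  obtain ⟨h1, h2, h3, _, _⟩ := hp
  simp [P2verts, Finset.card_insert_of_notMem, h1, h2, h3]

lemma figB_two_disjoint {p q : Fin 10 × Fin 10 × Fin 10} (hp : IsP2 figBGraph p)
    (hq : IsP2 figBGraph q) (hd : Disjoint (P2verts p) (P2verts q))
    (h6p : (6 : Fin 10) ∉ P2verts p) (h6q : (6 : Fin 10) ∉ P2verts q) : False := by
  have hsub : P2verts p ∪ P2verts q ⊆ ({0,1,2,3,4} : Finset (Fin 10)) :=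
    Finset.union_subset (figB_subset5 hp h6p) (figB_subset5 hq h6q)
  have := Finset.card_le_card hsub
  rw [Finset.card_union_of_disjoint hd, figB_card3 hp, figB_card3 hq] at this
  simp at this

theorem figB_no_three_disjoint_paths :
    ¬ ∃ p q s : Fin 10 × Fin 10 × Fin 10,
      IsP2 figBGraph p ∧ IsP2 figBGraph q ∧ IsP2 figBGraph s ∧
      Disjoint (P2verts p) (P2verts q) ∧ Disjoint (P2verts p) (P2verts s) ∧
      Disjoint (P2verts q) (P2verts s) := by
  rintro ⟨p, q, s, hp, hq, hs, dpq, dps, dqs⟩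
  by_cases h6p : (6 : Fin 10) ∈ P2verts p
  · exact figB_two_disjoint hq hs dqs
      (Finset.disjoint_left.mp dpq h6p) (Finset.disjoint_left.mp dps h6p)
  · by_cases h6q : (6 : Fin 10) ∈ P2verts q
    · exact figB_two_disjoint hp hs dps h6p (Finset.disjoint_left.mp dqs h6q)
    · exact figB_two_disjoint hp hq dpq h6p h6q
end

section
/- Let G be a graph and let X be a vertex set such that every component of G[X] (equivalently, of G − N(X) restricted to X) is either a copy of the net graph or a single edge, with s components being nets. Suppose there is a system of distinct representatives assigning to each vertex v ∈ N(X) a distinct component of G[X] adjacent to v. Then opt(G) = opt(G − (X ∪ N(X))) + s + |N(X)|. -/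
open Finset

variable {V : Type*}

/-- `s` induces a copy of the net graph in `G`: six distinct vertices forming a triangle
`x₁ x₂ x₃` with pendants `y₁ y₂ y₃`, and no other edges among them. -/
def IsNetSet (G : SimpleGraph V) (s : Set V) : Prop :=
  ∃ x₁ x₂ x₃ y₁ y₂ y₃ : V,
    List.Pairwise (· ≠ ·) [x₁, x₂, x₃, y₁, y₂, y₃] ∧
    s = {x₁, x₂, x₃, y₁, y₂, y₃} ∧
    G.Adj x₁ x₂ ∧ G.Adj x₂ x₃ ∧ G.Adj x₁ x₃ ∧
    G.Adj x₁ y₁ ∧ G.Adj x₂ y₂ ∧ G.Adj x₃ y₃ ∧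
    ¬ G.Adj x₁ y₂ ∧ ¬ G.Adj x₁ y₃ ∧ ¬ G.Adj x₂ y₁ ∧ ¬ G.Adj x₂ y₃ ∧
    ¬ G.Adj x₃ y₁ ∧ ¬ G.Adj x₃ y₂ ∧ ¬ G.Adj y₁ y₂ ∧ ¬ G.Adj y₁ y₃ ∧ ¬ G.Adj y₂ y₃

/-- `s` induces a single edge in `G`. -/
def IsEdgeSet (G : SimpleGraph V) (s : Set V) : Prop :=
  ∃ x y : V, x ≠ y ∧ s = {x, y} ∧ G.Adj x y

/-!
Upper bound: in a maximum packing of `G`, a path not inside `G - (X ∪ N(X))` either meets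
`N(X)` or, being connected and avoiding `N(X)`, lies inside one component of `G[X]`. An edge
holds no `P₂`, and a net holds no two disjoint ones, since every `P₂` in a net uses two of its
three triangle vertices. Charging each such path to a vertex of `N(X)` on it, or else to its net,
gives at most `|N(X)| + s` of them.

Lower bound: the distinct representatives let every `v ∈ N(X)` be packed with its own component.
An edge plus `v` is a `P₂`; a net plus `v` holds two disjoint `P₂`s; an unmatched net holds one.
These packings live on pairwise disjoint regions inside `X ∪ N(X)` and combine with a maximum
packing of `G - (X ∪ N(X))`.
-/

section Packing

variable [DecidableEq V] {G : SimpleGraph V}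

lemma mem_P2verts {a : V} {p : V × V × V} :
    a ∈ P2verts p ↔ a = p.1 ∨ a = p.2.1 ∨ a = p.2.2 := by
  simp [P2verts]

lemma ne_of_disjoint_P2verts {p q : V × V × V} (h : Disjoint (P2verts p) (P2verts q)) :
    p ≠ q := by
  rintro rfl
  exact disjoint_left.1 h (mem_P2verts.2 (Or.inl rfl)) (mem_P2verts.2 (Or.inl rfl))

lemma IsP2Packing.eq_of_mem_P2verts {P : Finset (V × V × V)} (hP : IsP2Packing G P)
    {p q : V × V × V} (hp : p ∈ P) (hq : q ∈ P) {a : V} (hap : a ∈ P2verts p)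
    (haq : a ∈ P2verts q) : p = q := by
  by_contra hpq
  exact disjoint_left.1 (hP.2 p hp q hq hpq) hap haq

lemma IsP2Packing.subset {P Q : Finset (V × V × V)} (hP : IsP2Packing G P) (hQP : Q ⊆ P) :
    IsP2Packing G Q :=
  ⟨fun p hp => hP.1 p (hQP hp), fun p hp q hq => hP.2 p (hQP hp) q (hQP hq)⟩

lemma isP2Packing_empty : IsP2Packing G ∅ :=
  ⟨by simp, by simp⟩

lemma isP2Packing_singleton {p : V × V × V} (hp : IsP2 G p) : IsP2Packing G {p} :=
  ⟨by simpa using hp, by simp⟩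

lemma isP2Packing_pair {p q : V × V × V} (hp : IsP2 G p) (hq : IsP2 G q)
    (hpq : Disjoint (P2verts p) (P2verts q)) : IsP2Packing G {p, q} := by
  refine ⟨by simp [hp, hq], ?_⟩
  simp only [mem_insert, mem_singleton]
  rintro a (rfl | rfl) b (rfl | rfl) hab <;> first | exact absurd rfl hab | skip
  exacts [hpq, hpq.symm]

def IsP2PackingIn (G : SimpleGraph V) (U : Set V) (P : Finset (V × V × V)) : Prop :=
  IsP2Packing G P ∧ ∀ p ∈ P, ↑(P2verts p) ⊆ U

lemma IsP2PackingIn.mono {U W : Set V} {P : Finset (V × V × V)} (hP : IsP2PackingIn G U P)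
    (hUW : U ⊆ W) : IsP2PackingIn G W P :=
  ⟨hP.1, fun p hp => (hP.2 p hp).trans hUW⟩

lemma isP2Packing_restrict_iff {S : Set V} {P : Finset (V × V × V)} :
    IsP2Packing (_root_.restrict G S) P ↔ IsP2PackingIn G S P := by
  simp only [IsP2PackingIn, IsP2Packing, IsP2, _root_.restrict, P2verts, coe_insert, coe_singleton,
    Set.insert_subset_iff, Set.singleton_subset_iff]
  constructor
  · rintro ⟨h, hdisj⟩
    exact ⟨⟨fun p hp => by have := h p hp; tauto, hdisj⟩, fun p hp => by have := h p hp; tauto⟩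
  · rintro ⟨⟨h, hdisj⟩, hS⟩
    exact ⟨fun p hp => by have := h p hp; have := hS p hp; tauto, hdisj⟩

lemma IsP2PackingIn.disjoint {U W : Set V} {P Q : Finset (V × V × V)}
    (hP : IsP2PackingIn G U P) (hQ : IsP2PackingIn G W Q) (hUW : Disjoint U W) :
    Disjoint P Q := by
  refine disjoint_left.2 fun p hpP hpQ => ?_
  have hp : p.1 ∈ (P2verts p : Set V) := mem_P2verts.2 (Or.inl rfl)
  exact Set.disjoint_left.1 hUW (hP.2 p hpP hp) (hQ.2 p hpQ hp)

lemma IsP2PackingIn.union {U W : Set V} {P Q : Finset (V × V × V)}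
    (hP : IsP2PackingIn G U P) (hQ : IsP2PackingIn G W Q) (hUW : Disjoint U W) :
    IsP2PackingIn G (U ∪ W) (P ∪ Q) := by
  have cross : ∀ p ∈ P, ∀ q ∈ Q, Disjoint (P2verts p) (P2verts q) := fun p hp q hq =>
    disjoint_coe.1 (hUW.mono (hP.2 p hp) (hQ.2 q hq))
  refine ⟨⟨?_, ?_⟩, ?_⟩
  · simp only [mem_union]
    rintro p (hp | hp)
    exacts [hP.1.1 p hp, hQ.1.1 p hp]
  · simp only [mem_union]
    rintro p (hp | hp) q (hq | hq) hpq
    exacts [hP.1.2 p hp q hq hpq, cross p hp q hq, (cross q hq p hp).symm, hQ.1.2 p hp q hq hpq]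
  · simp only [mem_union]
    rintro p (hp | hp)
    exacts [(hP.2 p hp).trans Set.subset_union_left, (hQ.2 p hp).trans Set.subset_union_right]

lemma IsP2PackingIn.biUnion {ι : Type*} {s : Finset ι} {R : ι → Set V}
    {Q : ι → Finset (V × V × V)} (hQ : ∀ i ∈ s, IsP2PackingIn G (R i) (Q i))
    (hR : (s : Set ι).PairwiseDisjoint R) :
    IsP2PackingIn G (⋃ i ∈ s, R i) (s.biUnion Q) := by
  refine ⟨⟨?_, ?_⟩, ?_⟩
  · simp only [mem_biUnion]
    rintro p ⟨i, hi, hp⟩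
    exact (hQ i hi).1.1 p hp
  · simp only [mem_biUnion]
    rintro p ⟨i, hi, hp⟩ q ⟨j, hj, hq⟩ hpq
    obtain rfl | hij := eq_or_ne i j
    · exact (hQ i hi).1.2 p hp q hq hpq
    · exact disjoint_coe.1 ((hR hi hj hij).mono ((hQ i hi).2 p hp) ((hQ j hj).2 q hq))
  · simp only [mem_biUnion]
    rintro p ⟨i, hi, hp⟩
    exact ((hQ i hi).2 p hp).trans (Set.subset_biUnion_of_mem (u := R) hi)

lemma IsP2PackingIn.card_biUnion {ι : Type*} {s : Finset ι} {R : ι → Set V}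
    {Q : ι → Finset (V × V × V)} (hQ : ∀ i ∈ s, IsP2PackingIn G (R i) (Q i))
    (hR : (s : Set ι).PairwiseDisjoint R) :
    #(s.biUnion Q) = ∑ i ∈ s, #(Q i) :=
  Finset.card_biUnion fun i hi j hj hij => (hQ i hi).disjoint (hQ j hj) (hR hi hj hij)

end Packing

section Opt

variable [Fintype V] [DecidableEq V]

lemma bddAbove_P2Packing_card (G : SimpleGraph V) :
    BddAbove {n | ∃ P : Finset (V × V × V), IsP2Packing G P ∧ #P = n} := by
  refine ⟨Fintype.card (V × V × V), ?_⟩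
  rintro n ⟨P, -, rfl⟩
  exact card_le_univ P

lemma IsP2Packing.card_le_opt {G : SimpleGraph V} {P : Finset (V × V × V)}
    (hP : IsP2Packing G P) : #P ≤ opt G :=
  le_csSup (bddAbove_P2Packing_card G) ⟨P, hP, rfl⟩

lemma exists_isP2Packing_card_eq_opt (G : SimpleGraph V) :
    ∃ P : Finset (V × V × V), IsP2Packing G P ∧ #P = opt G :=
  Nat.sSup_mem (s := {n | ∃ P : Finset (V × V × V), IsP2Packing G P ∧ #P = n})
    ⟨0, ∅, isP2Packing_empty, rfl⟩ (bddAbove_P2Packing_card G)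

end Opt

section Components

variable [DecidableEq V] {G : SimpleGraph V}

lemma IsEdgeSet.not_subset_of_isP2 {C : Set V} (hC : IsEdgeSet G C) {p : V × V × V}
    (hp : IsP2 G p) : ¬ ↑(P2verts p) ⊆ C := by
  obtain ⟨x, y, -, rfl, -⟩ := hC
  obtain ⟨a, b, c⟩ := p
  obtain ⟨hab, hac, hbc, -, -⟩ := hp
  simp only [P2verts, coe_insert, coe_singleton, Set.insert_subset_iff, Set.singleton_subset_iff,
    Set.mem_insert_iff, Set.mem_singleton_iff]
  rintro ⟨rfl | rfl, rfl | rfl, rfl | rfl⟩ <;> simp_all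

lemma IsEdgeSet.exists_isP2_insert {C : Set V} (hC : IsEdgeSet G C) {v c : V} (hv : v ∉ C)
    (hc : c ∈ C) (hvc : G.Adj v c) : ∃ p, IsP2 G p ∧ ↑(P2verts p) ⊆ insert v C := by
  obtain ⟨x, y, hxy, rfl, hadj⟩ := hC
  simp only [Set.mem_insert_iff, Set.mem_singleton_iff, not_or] at hv hc
  rcases hc with rfl | rfl
  · exact ⟨(v, c, y), by simp_all [IsP2, P2verts]⟩
  · exact ⟨(v, c, x), by simp_all [IsP2, P2verts, Set.insert_subset_iff, hadj.symm, Ne.symm]⟩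

lemma IsNetSet.exists_isP2_subset {C : Set V} (hC : IsNetSet G C) :
    ∃ p, IsP2 G p ∧ ↑(P2verts p) ⊆ C := by
  obtain ⟨x₁, x₂, x₃, y₁, y₂, y₃, hnd, rfl, a12, -, -, b1, -⟩ := hC
  simp only [List.pairwise_cons, List.mem_cons, List.not_mem_nil, or_false,
    List.Pairwise.nil, and_true, forall_eq_or_imp, forall_eq] at hnd
  exact ⟨(y₁, x₁, x₂), by simp_all [IsP2, P2verts, Set.insert_subset_iff, b1.symm, eq_comm]⟩

lemma IsEdgeSet.not_isNetSet {C : Set V} (hC : IsEdgeSet G C) : ¬ IsNetSet G C := fun hnet =>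
  have ⟨_, hp, hpC⟩ := hnet.exists_isP2_subset
  hC.not_subset_of_isP2 hp hpC

lemma IsNetSet.exists_disjoint_isP2_insert {C : Set V} (hC : IsNetSet G C) {v c : V}
    (hv : v ∉ C) (hc : c ∈ C) (hvc : G.Adj v c) :
    ∃ p q, IsP2 G p ∧ IsP2 G q ∧ Disjoint (P2verts p) (P2verts q) ∧
      ↑(P2verts p) ⊆ insert v C ∧ ↑(P2verts q) ⊆ C := by
  obtain ⟨x₁, x₂, x₃, y₁, y₂, y₃, hnd, rfl, a12, a23, a13, b1, b2, b3, -⟩ := hC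
  simp only [List.pairwise_cons, List.mem_cons, List.not_mem_nil, or_false,
    List.Pairwise.nil, and_true, forall_eq_or_imp, forall_eq] at hnd
  simp only [Set.mem_insert_iff, Set.mem_singleton_iff, not_or] at hv hc
  have := b1.symm; have := b2.symm; have := b3.symm
  rcases hc with rfl | rfl | rfl | rfl | rfl | rfl
  · exact ⟨(v, c, y₁), (y₂, x₂, x₃), by simp_all [IsP2, P2verts, Set.insert_subset_iff, eq_comm]⟩
  · exact ⟨(v, c, y₂), (y₁, x₁, x₃), by simp_all [IsP2, P2verts, Set.insert_subset_iff, eq_comm]⟩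
  · exact ⟨(v, c, y₃), (y₁, x₁, x₂), by simp_all [IsP2, P2verts, Set.insert_subset_iff, eq_comm]⟩
  · exact ⟨(v, c, x₁), (y₂, x₂, x₃), by simp_all [IsP2, P2verts, Set.insert_subset_iff, eq_comm]⟩
  · exact ⟨(v, c, x₂), (y₁, x₁, x₃), by simp_all [IsP2, P2verts, Set.insert_subset_iff, eq_comm]⟩
  · exact ⟨(v, c, x₃), (y₁, x₁, x₂), by simp_all [IsP2, P2verts, Set.insert_subset_iff, eq_comm]⟩

def IsLeafCore (G : SimpleGraph V) (C : Set V) (T : Finset V) : Prop :=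
  (∀ w ∈ C, w ∉ T → ∀ u ∈ C, ∀ u' ∈ C, G.Adj u w → G.Adj u' w → u = u') ∧
    ∀ u ∈ C, ∀ w ∈ C, ∀ w' ∈ C, w ∉ T → w' ∉ T → G.Adj u w → G.Adj u w' → w = w'

lemma IsLeafCore.two_le_card_inter {C : Set V} {T : Finset V} (hT : IsLeafCore G C T)
    {p : V × V × V} (hp : IsP2 G p) (hpC : ↑(P2verts p) ⊆ C) : 2 ≤ #(P2verts p ∩ T) := by
  obtain ⟨a, b, c⟩ := p
  obtain ⟨hab, hac, hbc, hab', hbc'⟩ := hp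
  simp only [P2verts, coe_insert, coe_singleton, Set.insert_subset_iff,
    Set.singleton_subset_iff] at hpC
  obtain ⟨ha, hb, hc⟩ := hpC
  have hbT : b ∈ T := by
    by_contra hbT
    exact hac (hT.1 b hb hbT a ha c hc hab' hbc'.symm)
  have hacT : a ∈ T ∨ c ∈ T := by
    by_contra! h
    exact hac (hT.2 b hb a ha c hc h.1 h.2 hab'.symm hbc')
  rcases hacT with haT | hcT
  · calc 2 = #{a, b} := (card_pair hab).symm
      _ ≤ #(P2verts (a, b, c) ∩ T) := card_le_card (by simp [P2verts, insert_subset_iff, haT, hbT])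
  · calc 2 = #{b, c} := (card_pair hbc).symm
      _ ≤ #(P2verts (a, b, c) ∩ T) := card_le_card (by simp [P2verts, insert_subset_iff, hcT, hbT])

lemma IsNetSet.exists_isLeafCore {C : Set V} (hC : IsNetSet G C) :
    ∃ T : Finset V, #T ≤ 3 ∧ IsLeafCore G C T := by
  obtain ⟨x₁, x₂, x₃, y₁, y₂, y₃, hnd, rfl, -, -, -, -, -, -,
    n12, n13, n21, n23, n31, n32, m12, m13, m23⟩ := hC
  simp only [List.pairwise_cons, List.mem_cons, List.not_mem_nil, or_false,
    List.Pairwise.nil, and_true, forall_eq_or_imp, forall_eq] at hnd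
  set C : Set V := {x₁, x₂, x₃, y₁, y₂, y₃}
  have hpend : ∀ z ∈ C,
      (G.Adj z y₁ → z = x₁) ∧ (G.Adj z y₂ → z = x₂) ∧ (G.Adj z y₃ → z = x₃) := by
    intro z hz
    simp only [C, Set.mem_insert_iff, Set.mem_singleton_iff] at hz
    rcases hz with rfl | rfl | rfl | rfl | rfl | rfl <;> simp_all [G.adj_comm z]
  have hleaf : ∀ w ∈ C, w ∉ ({x₁, x₂, x₃} : Finset V) → w = y₁ ∨ w = y₂ ∨ w = y₃ := by
    intro w hw hwT
    simp only [C, mem_insert, mem_singleton, Set.mem_insert_iff, Set.mem_singleton_iff] at hw hwT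
    tauto
  refine ⟨{x₁, x₂, x₃}, card_le_three, ?_, ?_⟩
  · intro w hw hwT u hu u' hu' h h'
    have hu := hpend u hu; have hu' := hpend u' hu'
    rcases hleaf w hw hwT with rfl | rfl | rfl
    exacts [(hu.1 h).trans (hu'.1 h').symm, (hu.2.1 h).trans (hu'.2.1 h').symm,
      (hu.2.2 h).trans (hu'.2.2 h').symm]
  · intro u hu w hw w' hw' hwT hwT' h h'
    obtain ⟨h₁, h₂, h₃⟩ := hpend u hu
    rcases hleaf w hw hwT with rfl | rfl | rfl <;> rcases hleaf w' hw' hwT' with rfl | rfl | rfl <;>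
      first | rfl | grind

lemma IsNetSet.not_disjoint_of_isP2 {C : Set V} (hC : IsNetSet G C) {p q : V × V × V}
    (hp : IsP2 G p) (hq : IsP2 G q) (hpC : ↑(P2verts p) ⊆ C) (hqC : ↑(P2verts q) ⊆ C) :
    ¬ Disjoint (P2verts p) (P2verts q) := by
  obtain ⟨T, hT3, hT⟩ := hC.exists_isLeafCore
  intro hpq
  have := hT.two_le_card_inter hp hpC
  have := hT.two_le_card_inter hq hqC
  have : #(P2verts p ∩ T) + #(P2verts q ∩ T) ≤ #T := by
    rw [← card_union_of_disjoint (hpq.mono inter_subset_left inter_subset_left)]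
    exact card_le_card (union_subset inter_subset_right inter_subset_right)
  omega

end Components

lemma pairwiseDisjoint_union_filter {ι : Type*} [DecidableEq ι] {X : Set V} {comps : ι → Set V}
    (hsub : ∀ i, comps i ⊆ X) (hdisj : ∀ i j, i ≠ j → Disjoint (comps i) (comps j))
    {N : Finset V} (hNX : ∀ v ∈ N, v ∉ X) (rep : V → ι) (s : Set ι) :
    s.PairwiseDisjoint fun i => comps i ∪ ↑(N.filter (rep · = i)) := by
  intro i _ j _ hij
  rw [Function.onFun, Set.disjoint_union_left, Set.disjoint_union_right,
    Set.disjoint_union_right]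
  have hFX : ∀ k, ∀ v ∈ N.filter (rep · = k), v ∉ X := fun k v hv => hNX v (mem_filter.1 hv).1
  refine ⟨⟨hdisj i j hij, Set.disjoint_right.2 fun v hv h => hFX j v hv (hsub i h)⟩,
    Set.disjoint_left.2 fun v hv h => hFX i v hv (hsub j h),
    Set.disjoint_left.2 fun v hv hv' => hij ((mem_filter.1 hv).2.symm.trans (mem_filter.1 hv').2)⟩

section Crown

variable [DecidableEq V] {G : SimpleGraph V} {ι : Type*}

lemma IsP2.P2verts_subset_of_forall_notMem_nbhd {X : Set V} {p : V × V × V} (hp : IsP2 G p)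
    {a : V} (hap : a ∈ P2verts p) (haX : a ∈ X) (hN : ∀ b ∈ P2verts p, b ∉ nbhd G X) :
    ↑(P2verts p) ⊆ X := by
  obtain ⟨a₁, a₂, a₃⟩ := p
  obtain ⟨-, -, -, h₁₂, h₂₃⟩ := hp
  have step : ∀ u w, G.Adj u w → u ∈ X → w ∈ P2verts (a₁, a₂, a₃) → w ∈ X := fun u w huw hu hw =>
    not_not.1 fun hwX => hN w hw ⟨hwX, u, hu, huw.symm⟩
  have h₁ : a₁ ∈ P2verts (a₁, a₂, a₃) := by simp [P2verts]
  have h₂ : a₂ ∈ P2verts (a₁, a₂, a₃) := by simp [P2verts]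
  have h₃ : a₃ ∈ P2verts (a₁, a₂, a₃) := by simp [P2verts]
  have ha₂ : a₂ ∈ X := by
    rcases mem_P2verts.1 hap with rfl | rfl | rfl
    exacts [step _ _ h₁₂ haX h₂, haX, step _ _ h₂₃.symm haX h₂]
  intro z hz
  rcases mem_P2verts.1 hz with rfl | rfl | rfl
  exacts [step _ _ h₁₂.symm ha₂ h₁, ha₂, step _ _ h₂₃ ha₂ h₃]

lemma IsP2.exists_P2verts_subset {comps : ι → Set V}
    (hnocross : ∀ i j, i ≠ j → ∀ x ∈ comps i, ∀ y ∈ comps j, ¬ G.Adj x y)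
    {p : V × V × V} (hp : IsP2 G p) (hpX : ↑(P2verts p) ⊆ ⋃ i, comps i) :
    ∃ i, ↑(P2verts p) ⊆ comps i := by
  obtain ⟨a₁, a₂, a₃⟩ := p
  obtain ⟨-, -, -, h₁₂, h₂₃⟩ := hp
  simp only [P2verts, coe_insert, coe_singleton, Set.insert_subset_iff, Set.singleton_subset_iff,
    Set.mem_iUnion] at hpX ⊢
  obtain ⟨⟨i, h₁⟩, ⟨j, h₂⟩, ⟨k, h₃⟩⟩ := hpX
  obtain rfl : i = j := not_not.1 fun hij => hnocross i j hij _ h₁ _ h₂ h₁₂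
  obtain rfl : i = k := not_not.1 fun hik => hnocross i k hik _ h₂ _ h₃ h₂₃
  exact ⟨i, h₁, h₂, h₃⟩

lemma IsP2.exists_mem_nbhd_or_subset_net {X : Set V} {comps : ι → Set V}
    (hcover : X = ⋃ i, comps i)
    (hnocross : ∀ i j, i ≠ j → ∀ x ∈ comps i, ∀ y ∈ comps j, ¬ G.Adj x y)
    (htype : ∀ i, IsNetSet G (comps i) ∨ IsEdgeSet G (comps i))
    {p : V × V × V} (hp : IsP2 G p) (hpS : ¬ ↑(P2verts p) ⊆ (X ∪ nbhd G X)ᶜ) :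
    (∃ v ∈ P2verts p, v ∈ nbhd G X) ∨ ∃ i, IsNetSet G (comps i) ∧ ↑(P2verts p) ⊆ comps i := by
  refine or_iff_not_imp_left.2 fun hN => ?_
  obtain ⟨a, hap, ha⟩ := Set.not_subset.1 hpS
  have haX : a ∈ X := (Set.notMem_compl_iff.1 ha).resolve_right fun haN => hN ⟨a, hap, haN⟩
  obtain ⟨i, hi⟩ := hp.exists_P2verts_subset hnocross
    (hcover ▸ hp.P2verts_subset_of_forall_notMem_nbhd hap haX fun b hb hbN => hN ⟨b, hb, hbN⟩)
  exact ⟨i, (htype i).resolve_right fun hedge => hedge.not_subset_of_isP2 hp hi, hi⟩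

lemma exists_isP2PackingIn_of_card_le_one {C : Set V} [Decidable (IsNetSet G C)]
    (hC : IsNetSet G C ∨ IsEdgeSet G C) {F : Finset V} (hF : #F ≤ 1)
    (hFC : ∀ v ∈ F, v ∉ C ∧ ∃ c ∈ C, G.Adj v c) :
    ∃ Q, IsP2PackingIn G (C ∪ ↑F) Q ∧ (if IsNetSet G C then 1 else 0) + #F ≤ #Q := by
  obtain rfl | ⟨v, rfl⟩ : F = ∅ ∨ ∃ v, F = {v} := by
    rcases Nat.le_one_iff_eq_zero_or_eq_one.1 hF with h | h
    exacts [Or.inl (card_eq_zero.1 h), Or.inr (card_eq_one.1 h)]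
  · rcases hC with hnet | hedge
    · obtain ⟨p, hp, hpC⟩ := hnet.exists_isP2_subset
      exact ⟨{p}, ⟨isP2Packing_singleton hp, by simpa using hpC⟩, by simp [hnet]⟩
    · exact ⟨∅, ⟨isP2Packing_empty, by simp⟩, by simp [hedge.not_isNetSet]⟩
  · obtain ⟨hv, c, hc, hvc⟩ := hFC v (mem_singleton_self v)
    have hCv : C ∪ ↑({v} : Finset V) = insert v C := by simp
    rw [hCv]
    rcases hC with hnet | hedge
    · obtain ⟨p, q, hp, hq, hpq, hpC, hqC⟩ := hnet.exists_disjoint_isP2_insert hv hc hvc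
      refine ⟨{p, q}, ⟨isP2Packing_pair hp hq hpq, ?_⟩, ?_⟩
      · simpa using ⟨hpC, hqC.trans (Set.subset_insert v C)⟩
      · simp [hnet, card_pair (ne_of_disjoint_P2verts hpq)]
    · obtain ⟨p, hp, hpC⟩ := hedge.exists_isP2_insert hv hc hvc
      exact ⟨{p}, ⟨isP2Packing_singleton hp, by simpa using hpC⟩, by simp [hedge.not_isNetSet]⟩

end Crown

section Bounds

variable [Fintype V] [DecidableEq V] {G : SimpleGraph V} {X : Set V} {ι : Type*} [Fintype ι]
  {comps : ι → Set V}

lemma opt_le_opt_restrict_add (hcover : X = ⋃ i, comps i)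
    (hnocross : ∀ i j, i ≠ j → ∀ x ∈ comps i, ∀ y ∈ comps j, ¬ G.Adj x y)
    (htype : ∀ i, IsNetSet G (comps i) ∨ IsEdgeSet G (comps i)) :
    opt G ≤ opt (restrict G ((X ∪ nbhd G X)ᶜ)) + Nat.card {i : ι // IsNetSet G (comps i)} +
      (nbhd G X).ncard := by
  classical
  set S := (X ∪ nbhd G X)ᶜ
  obtain ⟨P, hP, hPcard⟩ := exists_isP2Packing_card_eq_opt G
  have hin : #(P.filter fun p => ↑(P2verts p) ⊆ S) ≤ opt (restrict G S) :=
    (isP2Packing_restrict_iff.2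
      ⟨hP.subset (filter_subset _ _), fun p hp => (mem_filter.1 hp).2⟩).card_le_opt
  have hout : #(P.filter fun p => ¬ ↑(P2verts p) ⊆ S) ≤
      #((nbhd G X).toFinset.disjSum (univ.filter fun i => IsNetSet G (comps i))) := by
    refine card_le_card_of_forall_subsingleton
      (fun p => Sum.elim (· ∈ P2verts p) fun i => ↑(P2verts p) ⊆ comps i) ?_ ?_
    · intro p hp
      obtain ⟨hpP, hpS⟩ := mem_filter.1 hp
      rcases (hP.1 p hpP).exists_mem_nbhd_or_subset_net hcover hnocross htype hpS with
        ⟨v, hvp, hvN⟩ | ⟨i, hi, hpi⟩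
      · exact ⟨.inl v, by simpa using hvN, hvp⟩
      · exact ⟨.inr i, by simpa using hi, hpi⟩
    · rintro (v | i) hb p ⟨hp, hvp⟩ q ⟨hq, hvq⟩
      · exact hP.eq_of_mem_P2verts (mem_filter.1 hp).1 (mem_filter.1 hq).1 hvp hvq
      · have hpP := (mem_filter.1 hp).1
        have hqP := (mem_filter.1 hq).1
        by_contra hpq
        exact (mem_filter.1 (inr_mem_disjSum.1 hb)).2.not_disjoint_of_isP2 (hP.1 p hpP)
          (hP.1 q hqP) hvp hvq (hP.2 p hpP q hqP hpq)
  rw [card_disjSum, ← Set.ncard_eq_toFinset_card', ← Fintype.card_subtype,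
    ← Nat.card_eq_fintype_card] at hout
  have := card_filter_add_card_filter_not (s := P) fun p => ↑(P2verts p) ⊆ S
  omega

lemma opt_restrict_add_le_opt (hsub : ∀ i, comps i ⊆ X)
    (hdisj : ∀ i j, i ≠ j → Disjoint (comps i) (comps j))
    (htype : ∀ i, IsNetSet G (comps i) ∨ IsEdgeSet G (comps i))
    {rep : V → ι} (hrepinj : Set.InjOn rep (nbhd G X))
    (hrep : ∀ v ∈ nbhd G X, ∃ w ∈ comps (rep v), G.Adj v w) :
    opt (restrict G ((X ∪ nbhd G X)ᶜ)) + Nat.card {i : ι // IsNetSet G (comps i)} +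
      (nbhd G X).ncard ≤ opt G := by
  classical
  set N := (nbhd G X).toFinset
  have hNX : ∀ v ∈ N, v ∉ X := fun v hv => (Set.mem_toFinset.1 hv).1
  set F : ι → Finset V := fun i => N.filter (rep · = i)
  have hcomp : ∀ i, ∃ Q, IsP2PackingIn G (comps i ∪ ↑(F i)) Q ∧
      (if IsNetSet G (comps i) then 1 else 0) + #(F i) ≤ #Q := by
    refine fun i => exists_isP2PackingIn_of_card_le_one (htype i) ?_ ?_
    · refine card_le_one.2 fun v hv w hw => ?_
      obtain ⟨hvN, rfl⟩ := mem_filter.1 hv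
      obtain ⟨hwN, hwv⟩ := mem_filter.1 hw
      exact hrepinj (Set.mem_toFinset.1 hvN) (Set.mem_toFinset.1 hwN) hwv.symm
    · intro v hv
      obtain ⟨hvN, rfl⟩ := mem_filter.1 hv
      exact ⟨fun h => hNX v hvN (hsub _ h), hrep v (Set.mem_toFinset.1 hvN)⟩
  choose Q hQ hQcard using hcomp
  have hregions := pairwiseDisjoint_union_filter hsub hdisj hNX rep (univ : Finset ι)
  have hQU : IsP2PackingIn G (X ∪ nbhd G X) (univ.biUnion Q) :=
    (IsP2PackingIn.biUnion (fun i _ => hQ i) hregions).mono <| Set.iUnion₂_subset fun i _ =>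
      Set.union_subset_union (hsub i) fun v hv => Set.mem_toFinset.1 (mem_filter.1 hv).1
  obtain ⟨P', hP', hP'card⟩ := exists_isP2Packing_card_eq_opt (restrict G ((X ∪ nbhd G X)ᶜ))
  have hPQ := (isP2Packing_restrict_iff.1 hP').union hQU disjoint_compl_left
  have hcount : Nat.card {i : ι // IsNetSet G (comps i)} + (nbhd G X).ncard ≤ #(univ.biUnion Q) :=
    calc Nat.card {i : ι // IsNetSet G (comps i)} + (nbhd G X).ncard
        = ∑ i, ((if IsNetSet G (comps i) then 1 else 0) + #(F i)) := by
          rw [sum_add_distrib, ← card_filter, Nat.card_eq_fintype_card, Fintype.card_subtype,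
            Set.ncard_eq_toFinset_card', card_eq_sum_card_fiberwise fun v _ => mem_univ (rep v)]
      _ ≤ ∑ i, #(Q i) := sum_le_sum fun i _ => hQcard i
      _ = #(univ.biUnion Q) := (IsP2PackingIn.card_biUnion (fun i _ => hQ i) hregions).symm
  have := hPQ.1.card_le_opt
  rw [card_union_of_disjoint ((isP2Packing_restrict_iff.1 hP').disjoint hQU disjoint_compl_left)]
    at this
  omega

end Bounds

theorem net_crown_reduction {V : Type*} [Fintype V] [DecidableEq V]
    (G : SimpleGraph V) (X : Set V)
    (ι : Type*) [Fintype ι] (comps : ι → Set V)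
    -- the `comps i` are the components of `G[X]`:
    (hsub : ∀ i, comps i ⊆ X)
    (hcover : X = ⋃ i, comps i)
    (hdisj : ∀ i j, i ≠ j → Disjoint (comps i) (comps j))
    (hnocross : ∀ i j, i ≠ j → ∀ x ∈ comps i, ∀ y ∈ comps j, ¬ G.Adj x y)
    -- each component is a copy of the net graph or a single edge:
    (htype : ∀ i, IsNetSet G (comps i) ∨ IsEdgeSet G (comps i))
    -- `s` is the number of net components:
    (s : ℕ) (hs : Nat.card {i : ι // IsNetSet G (comps i)} = s)
    -- system of distinct representatives: each `v ∈ N(X)` gets its own adjacent component: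
    (rep : V → ι) (hrepinj : Set.InjOn rep (nbhd G X))
    (hrep : ∀ v ∈ nbhd G X, ∃ w ∈ comps (rep v), G.Adj v w) :
    opt G = opt (restrict G ((X ∪ nbhd G X)ᶜ)) + s + (nbhd G X).ncard := by
  subst hs
  exact le_antisymm (opt_le_opt_restrict_add hcover hnocross htype)
    (opt_restrict_add_le_opt hsub hdisj htype hrepinj hrep)
end
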